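/- Let X₁, …, X_T be measurable spaces and let p and q be probability measures on the product ∏_{t=1}^T X_t obtained by sequential composition of Markov kernels: p has initial law μ₁ and step-t transition kernels κ_t(x_{<t}, ·), and q has initial law ν₁ and step-t transition kernels λ_t(x_{<t}, ·). Define ε₁ := TV(μ₁, ν₁) and, for t ≥ 2, ε_t := E_{x_{<t} ∼ p}[ TV(κ_t(x_{<t}, ·), λ_t(x_{<t}, ·)) ], the expected per-step total-variation deviation under the true prefix law. Then TV(p, q) ≤ Σ_{t=1}^T ε_t. -/

import Mathlib

/-!
Each step of a sequential law composes the prefix law with a Markov kernel, and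
`TV(κ ∘ p, λ ∘ q) ≤ TV(κ ∘ p, λ ∘ p) + TV(λ ∘ p, λ ∘ q)`. The first term is at most the
`p`-average of the pointwise deviations `TV(κ x, λ x)`; the second is at most `TV(p, q)`,
because composing with a Markov kernel does not increase total variation (a layer-cake argument
turns `|∫ f ∂p - ∫ f ∂q|` for `0 ≤ f ≤ 1` into an average of `|p A - q A|`). Induction on the
number of steps sums these local deviations.
-/

open MeasureTheory ProbabilityTheory Set

noncomputable def tvDist {X : Type*} [MeasurableSpace X] (μ ν : Measure X) : ℝ :=
  ⨆ s : { s : Set X // MeasurableSet s }, |(μ s.1).toReal - (ν s.1).toReal|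

noncomputable def seqLaw (X : ℕ → Type*) [∀ n, MeasurableSpace (X n)]
    (μ : Measure (X 0)) (κ : (t : ℕ) → Kernel (∀ i : Fin (t + 1), X i) (X (t + 1))) :
    (n : ℕ) → Measure (∀ i : Fin (n + 1), X i)
  | 0 => μ.map (fun x => Fin.cons x (fun i : Fin 0 => i.elim0))
  | n + 1 => (seqLaw X μ κ n).bind (fun x => ((κ n) x).map (fun y => Fin.snoc x y))

section TotalVariation

variable {α β : Type*} [MeasurableSpace α] [MeasurableSpace β]

lemma tvDist_nonneg (μ ν : Measure α) : 0 ≤ tvDist μ ν :=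
  Real.iSup_nonneg fun _ => abs_nonneg _

lemma tvDist_le {μ ν : Measure α} {c : ℝ}
    (h : ∀ s, MeasurableSet s → |μ.real s - ν.real s| ≤ c) : tvDist μ ν ≤ c :=
  ciSup_le fun s => h s.1 s.2

lemma abs_measureReal_sub_le_tvDist (μ ν : Measure α) [IsFiniteMeasure μ] [IsFiniteMeasure ν]
    {s : Set α} (hs : MeasurableSet s) : |μ.real s - ν.real s| ≤ tvDist μ ν := by
  refine le_ciSup (f := fun t : {t : Set α // MeasurableSet t} => |μ.real t.1 - ν.real t.1|)
    ⟨μ.real univ + ν.real univ, ?_⟩ ⟨s, hs⟩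
  rintro _ ⟨t, rfl⟩
  have hμ : μ.real t.1 ≤ μ.real univ := measureReal_mono (subset_univ _)
  have hν : ν.real t.1 ≤ ν.real univ := measureReal_mono (subset_univ _)
  exact abs_sub_le_iff.2 ⟨by linarith [measureReal_nonneg (μ := ν) (s := t.1)],
    by linarith [measureReal_nonneg (μ := μ) (s := t.1)]⟩

lemma tvDist_le_one (μ ν : Measure α) [IsProbabilityMeasure μ] [IsProbabilityMeasure ν] :
    tvDist μ ν ≤ 1 :=
  tvDist_le fun s _ => abs_sub_le_iff.2
    ⟨by linarith [measureReal_le_one (μ := μ) (s := s), measureReal_nonneg (μ := ν) (s := s)],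
     by linarith [measureReal_le_one (μ := ν) (s := s), measureReal_nonneg (μ := μ) (s := s)]⟩

lemma tvDist_triangle (μ ν ρ : Measure α) [IsFiniteMeasure μ] [IsFiniteMeasure ν]
    [IsFiniteMeasure ρ] : tvDist μ ρ ≤ tvDist μ ν + tvDist ν ρ :=
  tvDist_le fun _ hs => (abs_sub_le _ _ _).trans
    (add_le_add (abs_measureReal_sub_le_tvDist μ ν hs) (abs_measureReal_sub_le_tvDist ν ρ hs))

lemma tvDist_map_le (μ ν : Measure α) [IsFiniteMeasure μ] [IsFiniteMeasure ν] {f : α → β}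
    (hf : Measurable f) : tvDist (μ.map f) (ν.map f) ≤ tvDist μ ν :=
  tvDist_le fun _ hs => by
    rw [map_measureReal_apply hf hs, map_measureReal_apply hf hs]
    exact abs_measureReal_sub_le_tvDist μ ν (hf hs)

lemma abs_integral_sub_integral_le_tvDist (μ ν : Measure α) [IsFiniteMeasure μ]
    [IsFiniteMeasure ν] {f : α → ℝ} (hf : Measurable f) (h0 : ∀ x, 0 ≤ f x)
    (h1 : ∀ x, f x ≤ 1) : |∫ x, f x ∂μ - ∫ x, f x ∂ν| ≤ tvDist μ ν := by
  have layercake (m : Measure α) [IsFiniteMeasure m] :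
      ∫ x, f x ∂m = ∫ t in Ioc 0 1, m.real {x | t ≤ f x} :=
    (Integrable.of_bound hf.aestronglyMeasurable 1 (ae_of_all _ fun x => by
        rw [Real.norm_of_nonneg (h0 x)]; exact h1 x)).integral_eq_integral_Ioc_meas_le
      (ae_of_all _ h0) (ae_of_all _ h1)
  have hint (m : Measure α) [IsFiniteMeasure m] :
      Integrable (fun t => m.real {x | t ≤ f x}) (volume.restrict (Ioc (0 : ℝ) 1)) := by
    have hanti : Antitone fun t => m.real {x | t ≤ f x} :=
      fun _ _ hst => measureReal_mono fun _ h => hst.trans h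
    exact Integrable.of_bound hanti.measurable.aestronglyMeasurable (m.real univ)
      (ae_of_all _ fun t => by
        rw [Real.norm_of_nonneg measureReal_nonneg]; exact measureReal_mono (subset_univ _))
  rw [layercake μ, layercake ν, ← integral_sub (hint μ) (hint ν)]
  have hbound := norm_integral_le_of_norm_le_const (μ := volume.restrict (Ioc (0 : ℝ) 1))
    (f := fun t => μ.real {x | t ≤ f x} - ν.real {x | t ≤ f x}) (C := tvDist μ ν)
    (ae_of_all _ fun _ => abs_measureReal_sub_le_tvDist μ ν (hf measurableSet_Ici))
  simpa using hbound

end TotalVariation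

section Composition

variable {α β γ : Type*} [MeasurableSpace α] [MeasurableSpace β] [MeasurableSpace γ]

lemma ProbabilityTheory.Kernel.map_id_prod_apply (κ : Kernel α β) [IsSFiniteKernel κ]
    {f : α × β → γ} (hf : Measurable f) (a : α) :
    (Kernel.id ×ₖ κ).map f a = (κ a).map fun b => f (a, b) := by
  rw [Kernel.map_apply _ hf, Kernel.prod_apply, Kernel.id_apply, Measure.dirac_prod,
    Measure.map_map hf measurable_prodMk_left]
  rfl

lemma measureReal_comp_apply (κ : Kernel α β) [IsFiniteKernel κ] (μ : Measure α) {s : Set β}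
    (hs : MeasurableSet s) : (κ ∘ₘ μ).real s = ∫ x, (κ x).real s ∂μ := by
  rw [measureReal_def, Measure.bind_apply hs κ.aemeasurable,
    ← integral_toReal (κ.measurable_coe hs).aemeasurable (ae_of_all _ fun _ => measure_lt_top _ _)]
  rfl

lemma integrable_measureReal_apply (κ : Kernel α β) [IsMarkovKernel κ] (μ : Measure α)
    [IsFiniteMeasure μ] {s : Set β} (hs : MeasurableSet s) :
    Integrable (fun x => (κ x).real s) μ :=
  Integrable.of_bound (κ.measurable_coe hs).ennreal_toReal.aestronglyMeasurable 1
    (ae_of_all _ fun _ => by rw [Real.norm_of_nonneg measureReal_nonneg]; exact measureReal_le_one)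

lemma tvDist_comp_le_tvDist (κ : Kernel α β) [IsMarkovKernel κ] (μ ν : Measure α)
    [IsFiniteMeasure μ] [IsFiniteMeasure ν] : tvDist (κ ∘ₘ μ) (κ ∘ₘ ν) ≤ tvDist μ ν :=
  tvDist_le fun _ hs => by
    rw [measureReal_comp_apply κ μ hs, measureReal_comp_apply κ ν hs]
    exact abs_integral_sub_integral_le_tvDist μ ν (κ.measurable_coe hs).ennreal_toReal
      (fun _ => measureReal_nonneg) (fun _ => measureReal_le_one)

lemma tvDist_comp_le_integral (κ η : Kernel α β) [IsMarkovKernel κ] [IsMarkovKernel η]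
    (μ : Measure α) [IsFiniteMeasure μ] {d : α → ℝ} (hd : Integrable d μ)
    (hκη : ∀ x, tvDist (κ x) (η x) ≤ d x) : tvDist (κ ∘ₘ μ) (η ∘ₘ μ) ≤ ∫ x, d x ∂μ :=
  tvDist_le fun s hs => calc
    |(κ ∘ₘ μ).real s - (η ∘ₘ μ).real s| = |∫ x, ((κ x).real s - (η x).real s) ∂μ| := by
      rw [measureReal_comp_apply κ μ hs, measureReal_comp_apply η μ hs,
        integral_sub (integrable_measureReal_apply κ μ hs) (integrable_measureReal_apply η μ hs)]
    _ ≤ ∫ x, |(κ x).real s - (η x).real s| ∂μ := abs_integral_le_integral_abs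
    _ ≤ ∫ x, d x ∂μ := integral_mono
      ((integrable_measureReal_apply κ μ hs).sub (integrable_measureReal_apply η μ hs)).abs hd
      fun x => (abs_measureReal_sub_le_tvDist (κ x) (η x) hs).trans (hκη x)

lemma tvDist_comp_le (κ η : Kernel α β) [IsMarkovKernel κ] [IsMarkovKernel η]
    (μ ν : Measure α) [IsFiniteMeasure μ] [IsFiniteMeasure ν] {d : α → ℝ} (hd : Integrable d μ)
    (hκη : ∀ x, tvDist (κ x) (η x) ≤ d x) :
    tvDist (κ ∘ₘ μ) (η ∘ₘ ν) ≤ tvDist μ ν + ∫ x, d x ∂μ :=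
  calc tvDist (κ ∘ₘ μ) (η ∘ₘ ν) ≤ tvDist (κ ∘ₘ μ) (η ∘ₘ μ) + tvDist (η ∘ₘ μ) (η ∘ₘ ν) :=
        tvDist_triangle _ _ _
    _ ≤ ∫ x, d x ∂μ + tvDist μ ν :=
        add_le_add (tvDist_comp_le_integral κ η μ hd hκη) (tvDist_comp_le_tvDist η μ ν)
    _ = tvDist μ ν + ∫ x, d x ∂μ := add_comm _ _

lemma tvDist_map_id_prod_le (κ η : Kernel α β) [IsFiniteKernel κ] [IsFiniteKernel η]
    {f : α × β → γ} (hf : Measurable f) (a : α) :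
    tvDist ((Kernel.id ×ₖ κ).map f a) ((Kernel.id ×ₖ η).map f a) ≤ tvDist (κ a) (η a) := by
  rw [Kernel.map_id_prod_apply κ hf, Kernel.map_id_prod_apply η hf]
  exact tvDist_map_le _ _ (hf.comp measurable_prodMk_left)

end Composition

section Sequential

variable (X : ℕ → Type*) [∀ n, MeasurableSpace (X n)]

lemma measurable_cons_elim0 :
    Measurable fun x : X 0 => (Fin.cons x (fun i : Fin 0 => i.elim0) : ∀ i : Fin 1, X i) :=
  measurable_pi_lambda _ fun i =>
    Fin.cases (by simp only [Fin.cons_zero]; exact measurable_id) (fun j => j.elim0) i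

lemma measurable_snoc (n : ℕ) :
    Measurable fun p : (∀ i : Fin (n + 1), X i) × X (n + 1) =>
      (Fin.snoc p.1 p.2 : ∀ i : Fin (n + 2), X i) := by
  refine measurable_pi_lambda _ fun i => Fin.lastCases ?_ (fun j => ?_) i
  · simpa [Fin.snoc_last] using measurable_snd
  · simp only [Fin.snoc_castSucc]
    exact (measurable_pi_apply j).comp measurable_fst

noncomputable def snocKernel {n : ℕ} (κ : Kernel (∀ i : Fin (n + 1), X i) (X (n + 1))) :
    Kernel (∀ i : Fin (n + 1), X i) (∀ i : Fin (n + 2), X i) :=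
  (Kernel.id ×ₖ κ).map fun p => Fin.snoc p.1 p.2

instance {n : ℕ} (κ : Kernel (∀ i : Fin (n + 1), X i) (X (n + 1))) [IsMarkovKernel κ] :
    IsMarkovKernel (snocKernel X κ) :=
  Kernel.IsMarkovKernel.map _ (measurable_snoc X n)

variable {X}

lemma seqLaw_succ (μ : Measure (X 0)) (κ : (t : ℕ) → Kernel (∀ i : Fin (t + 1), X i) (X (t + 1)))
    [∀ t, IsSFiniteKernel (κ t)] (n : ℕ) :
    seqLaw X μ κ (n + 1) = snocKernel X (κ n) ∘ₘ seqLaw X μ κ n := by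
  rw [seqLaw]
  congr 1
  funext x
  rw [snocKernel, Kernel.map_id_prod_apply _ (measurable_snoc X n)]
  rfl

instance (μ : Measure (X 0)) [IsProbabilityMeasure μ]
    (κ : (t : ℕ) → Kernel (∀ i : Fin (t + 1), X i) (X (t + 1))) [∀ t, IsMarkovKernel (κ t)]
    (n : ℕ) : IsProbabilityMeasure (seqLaw X μ κ n) := by
  induction n with
  | zero => exact Measure.isProbabilityMeasure_map (measurable_cons_elim0 X).aemeasurable
  | succ n ih =>
    rw [seqLaw_succ]
    infer_instance

end Sequential

/-- **Accumulation of local deviations (expectation / teacher-forcing version).** For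
sequential laws `p = seqLaw μ κ` and `q = seqLaw ν lam` on `T = n + 1` coordinates,
`TV(p, q) ≤ TV(μ, ν) + ∑_{t<n} E_{x ∼ p-prefix}[ TV(κ t x, lam t x) ]`, where the `t`-th
expectation is taken under the prefix law `seqLaw X μ κ t` of the true sequential law `p`. -/
theorem tv_accumulation_expectation (X : ℕ → Type*) [∀ n, MeasurableSpace (X n)] (n : ℕ)
    (μ ν : Measure (X 0)) [IsProbabilityMeasure μ] [IsProbabilityMeasure ν]
    (κ lam : (t : ℕ) → Kernel (∀ i : Fin (t + 1), X i) (X (t + 1)))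
    [∀ t, IsMarkovKernel (κ t)] [∀ t, IsMarkovKernel (lam t)]
    (hmeas : ∀ t < n, Measurable fun x => tvDist ((κ t) x) ((lam t) x)) :
    tvDist (seqLaw X μ κ n) (seqLaw X ν lam n) ≤
      tvDist μ ν +
        ∑ t ∈ Finset.range n, ∫ x, tvDist ((κ t) x) ((lam t) x) ∂seqLaw X μ κ t := by
  induction n with
  | zero => simpa [seqLaw] using tvDist_map_le μ ν (measurable_cons_elim0 X)
  | succ n ih =>
    have hint : Integrable (fun x => tvDist (κ n x) (lam n x)) (seqLaw X μ κ n) :=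
      Integrable.of_bound (hmeas n n.lt_succ_self).aestronglyMeasurable 1 (ae_of_all _ fun _ => by
        rw [Real.norm_of_nonneg (tvDist_nonneg _ _)]; exact tvDist_le_one _ _)
    rw [seqLaw_succ, seqLaw_succ, Finset.sum_range_succ, ← add_assoc]
    calc _ ≤ tvDist (seqLaw X μ κ n) (seqLaw X ν lam n) + ∫ x, tvDist (κ n x) (lam n x) ∂_ :=
          tvDist_comp_le (snocKernel X (κ n)) (snocKernel X (lam n)) _ _ hint
            (tvDist_map_id_prod_le _ _ (measurable_snoc X n))
      _ ≤ _ := add_le_add_left (ih fun t ht => hmeas t (ht.trans n.lt_succ_self)) _
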